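/- arXiv:1511.02041 — 2 statements merged into one kernel-verified Lean document; each statement's English description precedes it below -/
import Mathlib

section
/- For every real triple (X,Y,Z) with X²+Y²+Z²=1 there exist complex numbers α, β with |α|²+|β|²=1 such that X = Re(α²+β²), Y = Im(α²+β²) and Z = 2·Im(ᾱβ). -/
/-!
Put `p = α + iβ` and `q = α - iβ`. Then `α² + β² = p q`, `|α|² + |β|² = (|p|² + |q|²) / 2` and
`2 Im (ᾱ β) = (|q|² - |p|²) / 2`, so it suffices to find `p, q` with `p q = X + iY`,
`|p|² = 1 - Z` and `|q|² = 1 + Z`. Since `(1 - Z)(1 + Z) = X² + Y²`, one can take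
`q = √(1 + Z)` and `p = √(1 - Z) e^{i arg (X + iY)}`.
-/

open Complex

theorem exists_mul_eq_of_mul_eq_sq_norm (ζ : ℂ) {a b : ℝ} (ha : 0 ≤ a) (hb : 0 ≤ b)
    (hab : a * b = ‖ζ‖ ^ 2) : ∃ p q : ℂ, p * q = ζ ∧ ‖p‖ ^ 2 = a ∧ ‖q‖ ^ 2 = b := by
  refine ⟨Real.sqrt a * exp (arg ζ * I), Real.sqrt b, ?_, ?_, ?_⟩
  · have hsqrt : Real.sqrt a * Real.sqrt b = ‖ζ‖ := by
      rw [← Real.sqrt_mul ha, hab, Real.sqrt_sq (norm_nonneg ζ)]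
    calc Real.sqrt a * exp (arg ζ * I) * Real.sqrt b
        = ((Real.sqrt a * Real.sqrt b : ℝ) : ℂ) * exp (arg ζ * I) := by push_cast; ring
      _ = ζ := by rw [hsqrt, norm_mul_exp_arg_mul_I]
  · rw [norm_mul, norm_exp_ofReal_mul_I, mul_one, norm_real,
      Real.norm_of_nonneg (Real.sqrt_nonneg a), Real.sq_sqrt ha]
  · rw [norm_real, Real.norm_of_nonneg (Real.sqrt_nonneg b), Real.sq_sqrt hb]

section HalfSumDifference

variable (p q : ℂ)

theorem half_add_sq_add_I_mul_half_sub_sq :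
    ((p + q) / 2) ^ 2 + (I * (q - p) / 2) ^ 2 = p * q := by
  linear_combination ((q - p) ^ 2 / 4) * I_sq

theorem sq_norm_half_add_add_sq_norm_I_mul_half_sub :
    ‖(p + q) / 2‖ ^ 2 + ‖I * (q - p) / 2‖ ^ 2 = (‖p‖ ^ 2 + ‖q‖ ^ 2) / 2 := by
  simp only [Complex.sq_norm, normSq_apply, div_re, div_im, add_re, add_im, mul_re, mul_im,
    sub_re, sub_im, I_re, I_im]
  norm_num
  ring

theorem two_mul_im_conj_half_add_mul_I_mul_half_sub :
    2 * (starRingEnd ℂ ((p + q) / 2) * (I * (q - p) / 2)).im = (‖q‖ ^ 2 - ‖p‖ ^ 2) / 2 := by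
  simp only [Complex.sq_norm, normSq_apply, div_re, div_im, add_re, add_im, mul_re, mul_im,
    sub_re, sub_im, I_re, I_im, conj_re, conj_im]
  norm_num
  ring

end HalfSumDifference

/-- For every real triple `(X, Y, Z)` with `X² + Y² + Z² = 1` there exist
complex numbers `α, β` with `|α|² + |β|² = 1` such that `X = Re (α² + β²)`,
`Y = Im (α² + β²)` and `Z = 2 Im (ᾱ β)`. -/
theorem stmt_2 (X Y Z : ℝ) (h : X ^ 2 + Y ^ 2 + Z ^ 2 = 1) :
    ∃ α β : ℂ, ‖α‖ ^ 2 + ‖β‖ ^ 2 = 1 ∧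
      X = (α ^ 2 + β ^ 2).re ∧ Y = (α ^ 2 + β ^ 2).im ∧
      Z = 2 * (starRingEnd ℂ α * β).im := by
  have hZ : Z ^ 2 ≤ 1 := by nlinarith [sq_nonneg X, sq_nonneg Y]
  have hprod : (1 - Z) * (1 + Z) = ‖(X + Y * I : ℂ)‖ ^ 2 := by
    rw [Complex.sq_norm, normSq_add_mul_I]
    linarith
  obtain ⟨p, q, hpq, hp, hq⟩ := exists_mul_eq_of_mul_eq_sq_norm (X + Y * I)
    (by nlinarith) (by nlinarith) hprod
  refine ⟨(p + q) / 2, I * (q - p) / 2, ?_, ?_, ?_, ?_⟩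
  · rw [sq_norm_half_add_add_sq_norm_I_mul_half_sub, hp, hq]
    ring
  · simp [half_add_sq_add_I_mul_half_sub_sq, hpq]
  · simp [half_add_sq_add_I_mul_half_sub_sq, hpq]
  · rw [two_mul_im_conj_half_add_mul_I_mul_half_sub, hp, hq]
    ring
end

section
/- Every point P of the Chiang-type lagrangian 𝓛₂ with μ₂(P) = −1/6 satisfies μ₁(P) = −1/6; that is, the intersection 𝓛₂ ∩ μ₂⁻¹(−1/6) lies in the middle level set of μ₁ on the level μ₂ = −1/6 (whose range there is [−1/3, 0]), so that the induced lagrangian ℓ₂ in the reduced space is a great circle. -/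
open Complex

/-- The vector `(X - iY, √2 i Z, X + iY)` in `ℂ³`. -/
noncomputable def sphereVec (X Y Z : ℝ) : Fin 3 → ℂ :=
  ![(X : ℂ) - Complex.I * Y, (Real.sqrt 2 : ℂ) * Complex.I * Z, (X : ℂ) + Complex.I * Y]

lemma sphereVec_ne_zero {X Y Z : ℝ} (h : X ^ 2 + Y ^ 2 + Z ^ 2 = 1) :
    sphereVec X Y Z ≠ 0 := by
  intro h0
  have h0' : (X : ℂ) - Complex.I * Y = 0 := congrFun h0 0
  have h2' : (X : ℂ) + Complex.I * Y = 0 := congrFun h0 2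
  have h1' : (Real.sqrt 2 : ℂ) * Complex.I * Z = 0 := congrFun h0 1
  have hX : X = 0 := by
    have := congrArg Complex.re (by linear_combination h0' + h2' : (2 : ℂ) * X = 0)
    simpa using this
  have hY : Y = 0 := by
    have := congrArg Complex.im (by linear_combination h2' - h0' : (2 : ℂ) * Complex.I * Y = 0)
    simpa using this
  have hZ : Z = 0 := by
    rcases mul_eq_zero.mp h1' with h' | h'
    · rcases mul_eq_zero.mp h' with h'' | h''
      · exact absurd h'' (by simp [Complex.ext_iff, Real.sqrt_eq_zero'])
      · exact absurd h'' Complex.I_ne_zero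
    · exact_mod_cast h'
  rw [hX, hY, hZ] at h
  norm_num at h

/-- The Chiang-type lagrangian `𝓛₂ ⊆ ℙ(ℂ³)`, in its real description. -/
noncomputable def ChiangL2 : Set (Projectivization ℂ (Fin 3 → ℂ)) :=
  {P | ∃ (X Y Z : ℝ) (h : X ^ 2 + Y ^ 2 + Z ^ 2 = 1),
    P = Projectivization.mk ℂ (sphereVec X Y Z) (sphereVec_ne_zero h)}

/-- The moment map `μ₂` on (homogeneous coordinate vectors for) `ℙ(ℂ³)`:
`μ₂(z) = -|z₂|² / (2(|z₀|² + |z₁|² + |z₂|²))`. -/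
noncomputable def mu2 (z : Fin 3 → ℂ) : ℝ :=
  -‖z 2‖ ^ 2 /
    (2 * (‖z 0‖ ^ 2 + ‖z 1‖ ^ 2 + ‖z 2‖ ^ 2))

/-- The moment map `μ₁` on (homogeneous coordinate vectors for) `ℙ(ℂ³)`:
`μ₁(z) = -|z₁|² / (2(|z₀|² + |z₁|² + |z₂|²))`. -/
noncomputable def mu1 (z : Fin 3 → ℂ) : ℝ :=
  -‖z 1‖ ^ 2 /
    (2 * (‖z 0‖ ^ 2 + ‖z 1‖ ^ 2 + ‖z 2‖ ^ 2))

/-- `μ₂` as a function on the projective plane, via the canonical representative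
(`μ₂` on vectors is scale-invariant, so this is the descended function). -/
noncomputable def mu2P (P : Projectivization ℂ (Fin 3 → ℂ)) : ℝ := mu2 P.rep

/-- `μ₁` as a function on the projective plane, via the canonical representative
(`μ₁` on vectors is scale-invariant, so this is the descended function). -/
noncomputable def mu1P (P : Projectivization ℂ (Fin 3 → ℂ)) : ℝ := mu1 P.rep

/-! At the point `[X - iY : √2 iZ : X + iY]` of `𝓛₂` the squared moduli are `X² + Y²`, `2Z²`,
`X² + Y²`, with total `2`; so `μ₁ = -Z²/2` and `μ₂ = -(1 - Z²)/4`, and `𝓛₂` lies on the line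
`μ₁ + 2μ₂ = -1/2`, which meets `μ₂ = -1/6` at `μ₁ = -1/6`. The image of `(μ₁, μ₂)` is the moment
triangle `μ₁, μ₂ ≤ 0`, `μ₁ + μ₂ ≥ -1/2`, whose slice at `μ₂ = -1/6` is `[-1/3, 0]`. -/

theorem Projectivization.apply_rep_mk_of_smul_invariant {K V α : Type*} [DivisionRing K]
    [AddCommGroup V] [Module K V] (f : V → α) (hf : ∀ (a : Kˣ) (v : V), f (a • v) = f v)
    {v : V} (hv : v ≠ 0) : f (Projectivization.mk K v hv).rep = f v := by
  obtain ⟨a, ha⟩ := Projectivization.exists_smul_eq_mk_rep K v hv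
  rw [← ha, hf]

lemma neg_mul_div_two_mul_sum {k a x y w : ℝ} (hk : k ≠ 0) :
    -(k * a) / (2 * (k * x + k * y + k * w)) = -a / (2 * (x + y + w)) := by
  rw [show 2 * (k * x + k * y + k * w) = k * (2 * (x + y + w)) by ring, neg_mul_eq_mul_neg,
    mul_div_mul_left _ _ hk]

lemma mu1_smul (a : ℂˣ) (z : Fin 3 → ℂ) : mu1 (a • z) = mu1 z := by
  simp only [mu1, Pi.smul_apply, Units.smul_def, smul_eq_mul, norm_mul, mul_pow]
  exact neg_mul_div_two_mul_sum (by simp)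

lemma mu2_smul (a : ℂˣ) (z : Fin 3 → ℂ) : mu2 (a • z) = mu2 z := by
  simp only [mu2, Pi.smul_apply, Units.smul_def, smul_eq_mul, norm_mul, mul_pow]
  exact neg_mul_div_two_mul_sum (by simp)

lemma mu1P_mk (z : Fin 3 → ℂ) (hz : z ≠ 0) : mu1P (Projectivization.mk ℂ z hz) = mu1 z :=
  Projectivization.apply_rep_mk_of_smul_invariant mu1 mu1_smul hz

lemma mu2P_mk (z : Fin 3 → ℂ) (hz : z ≠ 0) : mu2P (Projectivization.mk ℂ z hz) = mu2 z :=
  Projectivization.apply_rep_mk_of_smul_invariant mu2 mu2_smul hz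

lemma mu1_nonpos (z : Fin 3 → ℂ) : mu1 z ≤ 0 :=
  div_nonpos_of_nonpos_of_nonneg (by simp) (by positivity)

lemma neg_half_le_mu1_add_mu2 (z : Fin 3 → ℂ) : -(1 / 2) ≤ mu1 z + mu2 z := by
  rw [mu1, mu2, ← add_div]
  rcases (show (0 : ℝ) ≤ 2 * (‖z 0‖ ^ 2 + ‖z 1‖ ^ 2 + ‖z 2‖ ^ 2) by positivity).eq_or_lt
    with hs | hs
  · rw [← hs, div_zero]
    norm_num
  · rw [le_div_iff₀ hs]
    nlinarith [sq_nonneg ‖z 0‖]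

lemma sq_norm_sphereVec_zero (X Y Z : ℝ) : ‖sphereVec X Y Z 0‖ ^ 2 = X ^ 2 + Y ^ 2 := by
  simp [sphereVec, Complex.sq_norm, Complex.normSq_apply]
  ring

lemma sq_norm_sphereVec_one (X Y Z : ℝ) : ‖sphereVec X Y Z 1‖ ^ 2 = 2 * Z ^ 2 := by
  simp [sphereVec, mul_pow]

lemma sq_norm_sphereVec_two (X Y Z : ℝ) : ‖sphereVec X Y Z 2‖ ^ 2 = X ^ 2 + Y ^ 2 := by
  simp [sphereVec, Complex.sq_norm, Complex.normSq_apply]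
  ring

lemma mu1_add_two_mul_mu2_sphereVec {X Y Z : ℝ} (h : X ^ 2 + Y ^ 2 + Z ^ 2 = 1) :
    mu1 (sphereVec X Y Z) + 2 * mu2 (sphereVec X Y Z) = -(1 / 2) := by
  rw [mu1, mu2, sq_norm_sphereVec_zero, sq_norm_sphereVec_one, sq_norm_sphereVec_two,
    show 2 * (X ^ 2 + Y ^ 2 + 2 * Z ^ 2 + (X ^ 2 + Y ^ 2)) = (4 : ℝ) by linear_combination 4 * h]
  linear_combination -h / 2

lemma mu1P_add_two_mul_mu2P_of_mem_chiangL2 {P : Projectivization ℂ (Fin 3 → ℂ)}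
    (hP : P ∈ ChiangL2) : mu1P P + 2 * mu2P P = -(1 / 2) := by
  obtain ⟨X, Y, Z, h, rfl⟩ := hP
  rw [mu1P_mk, mu2P_mk]
  exact mu1_add_two_mul_mu2_sphereVec h

lemma sq_norm_ofReal_sqrt {x : ℝ} (hx : 0 ≤ x) : ‖((√x : ℝ) : ℂ)‖ ^ 2 = x := by
  simp [hx]

lemma exists_mu1P_mu2P_eq {s t : ℝ} (hs : s ≤ 0) (ht : t ≤ 0) (hst : -(1 / 2) ≤ s + t) :
    ∃ P, mu1P P = s ∧ mu2P P = t := by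
  set w : Fin 3 → ℂ := ![(√(1 + 2 * s + 2 * t) : ℂ), (√(-(2 * s)) : ℂ), (√(-(2 * t)) : ℂ)]
  have e0 : ‖w 0‖ ^ 2 = 1 + 2 * s + 2 * t := sq_norm_ofReal_sqrt (by linarith)
  have e1 : ‖w 1‖ ^ 2 = -(2 * s) := sq_norm_ofReal_sqrt (by linarith)
  have e2 : ‖w 2‖ ^ 2 = -(2 * t) := sq_norm_ofReal_sqrt (by linarith)
  have hsum : ‖w 0‖ ^ 2 + ‖w 1‖ ^ 2 + ‖w 2‖ ^ 2 = 1 := by rw [e0, e1, e2]; ring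
  have hw : w ≠ 0 := fun h => by simp [h] at hsum
  refine ⟨Projectivization.mk ℂ w hw, ?_, ?_⟩
  · rw [mu1P_mk, mu1, hsum, e1]; ring
  · rw [mu2P_mk, mu2, hsum, e2]; ring

/-- Every point `P ∈ 𝓛₂` with `μ₂(P) = -1/6` satisfies `μ₁(P) = -1/6`,
i.e. `𝓛₂ ∩ μ₂⁻¹(-1/6)` lies in the middle level set of `μ₁` on the level `μ₂ = -1/6`, whose
range there is `[-1/3, 0]`; so the induced lagrangian in the reduced space is a great
circle. -/
theorem stmt_14 :
    (∀ P ∈ ChiangL2, mu2P P = -(1 / 6) → mu1P P = -(1 / 6)) ∧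
    mu1P '' {Q | mu2P Q = -(1 / 6)} = Set.Icc (-(1 / 3) : ℝ) 0 := by
  refine ⟨fun P hP h2 => by linarith [mu1P_add_two_mul_mu2P_of_mem_chiangL2 hP], ?_⟩
  ext t
  constructor
  · rintro ⟨P, hP : mu2P P = _, rfl⟩
    have hsum : -(1 / 2) ≤ mu1P P + mu2P P := neg_half_le_mu1_add_mu2 P.rep
    exact ⟨by linarith, mu1_nonpos P.rep⟩
  · rintro ⟨h1, h2⟩
    obtain ⟨P, hP1, hP2⟩ := exists_mu1P_mu2P_eq (t := -(1 / 6)) h2 (by norm_num) (by linarith)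
    exact ⟨P, hP2, hP1⟩
end
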